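/- (Reciprocity for Dedekind–Rademacher sums, special case.) For coprime positive integers a and b with a odd, s(a,b;0,1/2) + s(b,a;1/2,0) = (2b² - a² - 1)/(24ab). -/

import Mathlib

open Finset Real

open Classical in
/-- The sawtooth function: 0 on integers, fractional part minus 1/2 otherwise. -/
noncomputable def saw (x : ℝ) : ℝ :=
  if ∃ n : ℤ, x = n then 0 else Int.fract x - 1/2

/-- The Dedekind sum s(q,p). -/
noncomputable def dedekindSum (q : ℤ) (p : ℕ) : ℝ :=
  ∑ μ ∈ Finset.range p, saw ((μ : ℝ) / p) * saw ((q : ℝ) * μ / p)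

/-- The Dedekind–Rademacher sum s(q,p;x,y). -/
noncomputable def drSum (q : ℤ) (p : ℕ) (x y : ℝ) : ℝ :=
  ∑ μ ∈ Finset.range p, saw (((μ : ℝ) + y) / p) * saw ((q : ℝ) * ((μ : ℝ) + y) / p + x)

/-!
Splitting `range (2b)` into even and odd indices gives `s(a,b;0,1/2) = s(a,2b) - s(a,b)`, and the
duplication formula `((x + 1/2)) = ((2x)) - ((x))` gives `s(b,a;1/2,0) = s(2b,a) - s(b,a)`. Since `a`
is odd it is coprime to `2b`, so Dedekind reciprocity `12ab (s(a,b) + s(b,a)) = a² + b² - 3ab + 1`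
applies to both `(a,b)` and `(a,2b)`, and the difference of the two instances is the formula.

For reciprocity, with `r_k = ak mod b = ak - b⌊ak/b⌋` one has `b² s(a,b) = ∑ k r_k - b²(b-1)/4`; the
sum `∑ k r_k` is evaluated using `∑ r_k² = ∑ k²` (multiplication by `a` permutes the residues mod
`b`), `2 ∑ ⌊ak/b⌋ = (a-1)(b-1)`, and a weighted count of the lattice points under the line `bj = ak`.
-/

theorem sum_range_natCast_mul_two {R : Type*} [CommRing R] (n : ℕ) :
    (∑ i ∈ range n, (i : R)) * 2 = n * (n - 1) := by
  induction n with
  | zero => simp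
  | succ n ih => rw [sum_range_succ, add_mul, ih]; push_cast; ring

theorem sum_range_natCast_sq_mul_six {R : Type*} [CommRing R] (n : ℕ) :
    (∑ i ∈ range n, (i : R) ^ 2) * 6 = n * (n - 1) * (2 * n - 1) := by
  induction n with
  | zero => simp
  | succ n ih => rw [sum_range_succ, add_mul, ih]; push_cast; ring

theorem sum_range_two_mul {M : Type*} [AddCommMonoid M] (f : ℕ → M) (n : ℕ) :
    ∑ i ∈ range (2 * n), f i = ∑ i ∈ range n, f (2 * i) + ∑ i ∈ range n, f (2 * i + 1) := by
  induction n with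
  | zero => simp
  | succ n ih =>
    rw [mul_add, mul_one, sum_range_succ, sum_range_succ, ih, sum_range_succ, sum_range_succ]
    abel

theorem Int.natCast_mod_eq_sub (m n : ℕ) : ((m % n : ℕ) : ℤ) = m - n * (m / n : ℕ) := by
  push_cast [Int.emod_def]
  ring

theorem sum_range_mul_mul_mod_eq (a b : ℕ) :
    ∑ k ∈ range b, (k : ℤ) * (a * k % b : ℕ)
      = a * ∑ k ∈ range b, (k : ℤ) ^ 2 - b * ∑ k ∈ range b, (k : ℤ) * (a * k / b : ℕ) := by
  simp only [Int.natCast_mod_eq_sub, mul_sum, ← sum_sub_distrib, Nat.cast_mul]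
  exact sum_congr rfl fun k _ ↦ by ring

theorem sum_range_ite_le_eq_div_mul_succ {a b k : ℕ} (ha : 0 < a) (hk : k < b) :
    ∑ j ∈ range a, (if b * j ≤ a * k then 2 * (j : ℤ) else 0)
      = (a * k / b : ℕ) * ((a * k / b : ℕ) + 1) := by
  have hfilter : {j ∈ range a | b * j ≤ a * k} = range (a * k / b + 1) := by
    ext j
    simp only [mem_filter, mem_range, Nat.lt_succ_iff, Nat.le_div_iff_mul_le (by omega : 0 < b),
      mul_comm j b]
    exact ⟨And.right, fun hj ↦ ⟨by nlinarith, hj⟩⟩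
  have hgauss := sum_range_natCast_mul_two (R := ℤ) (a * k / b + 1)
  simp only [Nat.cast_add, Nat.cast_one, add_sub_cancel_right] at hgauss
  rw [← sum_filter, hfilter, ← mul_sum]
  linear_combination hgauss

namespace Nat.Coprime

variable {a b : ℕ}

theorem sum_range_comp_mul_mod {M : Type*} [AddCommMonoid M] (h : a.Coprime b) (f : ℕ → M) :
    ∑ k ∈ range b, f (a * k % b) = ∑ k ∈ range b, f k := by
  have hmaps : Set.MapsTo (fun k ↦ a * k % b) (range b) (range b) := fun k hk ↦
    mem_range.2 (Nat.mod_lt _ (by simp at hk; omega))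
  have hinj : Set.InjOn (fun k ↦ a * k % b) (range b) := fun x hx y hy hxy ↦
    (Nat.ModEq.cancel_left_of_coprime h.symm hxy).eq_of_lt_of_lt (mem_range.1 hx) (mem_range.1 hy)
  exact sum_nbij _ hmaps hinj (surjOn_of_injOn_of_card_le _ hmaps hinj le_rfl) fun _ _ ↦ rfl

theorem mul_ne_mul {j k : ℕ} (h : a.Coprime b) (hj : 0 < j) (hja : j < a) : b * j ≠ a * k :=
  fun he ↦ absurd (Nat.le_of_dvd hj (h.dvd_of_dvd_mul_left ⟨k, he⟩)) (by omega)

theorem two_mul_sum_range_mul_div (h : a.Coprime b) (hb : 0 < b) :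
    2 * ∑ k ∈ range b, ((a * k / b : ℕ) : ℤ) = (a - 1) * (b - 1) := by
  have hperm := h.sum_range_comp_mul_mod (fun k ↦ ((k : ℕ) : ℤ))
  simp only [Int.natCast_mod_eq_sub, Nat.cast_mul, sum_sub_distrib, ← mul_sum] at hperm
  refine mul_left_cancel₀ (by positivity : (b : ℤ) ≠ 0) ?_
  linear_combination (-2 : ℤ) * hperm + (a - 1 : ℤ) * sum_range_natCast_mul_two (R := ℤ) b

theorem sum_range_sq_sub_mul_div (h : a.Coprime b) :
    (a : ℤ) ^ 2 * ∑ k ∈ range b, (k : ℤ) ^ 2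
        - 2 * a * b * ∑ k ∈ range b, (k : ℤ) * (a * k / b : ℕ)
        + b ^ 2 * ∑ k ∈ range b, ((a * k / b : ℕ) : ℤ) ^ 2
      = ∑ k ∈ range b, (k : ℤ) ^ 2 := by
  have hperm := h.sum_range_comp_mul_mod (fun k ↦ ((k : ℕ) : ℤ) ^ 2)
  simp only [Int.natCast_mod_eq_sub] at hperm
  conv_rhs => rw [← hperm]
  simp only [mul_sum, ← sum_sub_distrib, ← sum_add_distrib, Nat.cast_mul]
  exact sum_congr rfl fun k _ ↦ by ring

theorem sum_range_ite_le_eq_mul_sub_div {j : ℕ} (h : a.Coprime b) (hb : 0 < b) (hja : j < a) :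
    ∑ k ∈ range b, (if b * j ≤ a * k then 2 * (j : ℤ) else 0)
      = 2 * j * (b - 1 - (b * j / a : ℕ)) := by
  rcases Nat.eq_zero_or_pos j with rfl | hj
  · simp
  have hp : b * j / a < b := Nat.div_lt_of_lt_mul (by nlinarith)
  have hfilter : {k ∈ range b | b * j ≤ a * k} = Ico (b * j / a + 1) b := by
    ext k
    simp only [mem_filter, mem_range, mem_Ico, Nat.succ_le_iff,
      Nat.div_lt_iff_lt_mul (by omega : 0 < a), mul_comm k a, (h.mul_ne_mul hj hja).le_iff_lt]
    tauto
  rw [← sum_filter, hfilter, sum_const, Nat.card_Ico, nsmul_eq_mul, Nat.cast_sub hp]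
  push_cast
  ring

theorem sum_range_sq_div_add_sum_range_div (h : a.Coprime b) (ha : 0 < a) (hb : 0 < b) :
    ∑ k ∈ range b, ((a * k / b : ℕ) : ℤ) ^ 2 + ∑ k ∈ range b, ((a * k / b : ℕ) : ℤ)
        + 2 * ∑ j ∈ range a, (j : ℤ) * (b * j / a : ℕ)
      = a * (a - 1) * (b - 1) := by
  -- sum `2j` over the lattice points `j < a`, `k < b` with `bj ≤ ak`, by rows and by columns
  have hrows : ∑ k ∈ range b, ∑ j ∈ range a, (if b * j ≤ a * k then 2 * (j : ℤ) else 0)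
      = ∑ k ∈ range b, ((a * k / b : ℕ) : ℤ) * ((a * k / b : ℕ) + 1) :=
    sum_congr rfl fun k hk ↦ sum_range_ite_le_eq_div_mul_succ ha (mem_range.1 hk)
  have hcols : ∑ j ∈ range a, ∑ k ∈ range b, (if b * j ≤ a * k then 2 * (j : ℤ) else 0)
      = ∑ j ∈ range a, 2 * (j : ℤ) * (b - 1 - (b * j / a : ℕ)) :=
    sum_congr rfl fun j hj ↦ h.sum_range_ite_le_eq_mul_sub_div hb (mem_range.1 hj)
  rw [sum_comm, hcols] at hrows
  simp only [mul_add, mul_sub, mul_one, mul_assoc (2 : ℤ), ← sq, sum_add_distrib, sum_sub_distrib,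
    ← mul_sum, ← sum_mul] at hrows
  linear_combination -hrows + (b - 1 : ℤ) * sum_range_natCast_mul_two (R := ℤ) a

theorem sum_range_mul_mul_mod_reciprocity (h : a.Coprime b) (ha : 0 < a) (hb : 0 < b) :
    12 * ((a : ℤ) ^ 2 * ∑ k ∈ range b, (k : ℤ) * (a * k % b : ℕ)
        + (b : ℤ) ^ 2 * ∑ j ∈ range a, (j : ℤ) * (b * j % a : ℕ))
      = a * b * (a ^ 2 + b ^ 2 + 1) + 3 * a ^ 2 * b ^ 2 * (a + b - 3) := by
  rw [sum_range_mul_mul_mod_eq, sum_range_mul_mul_mod_eq]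
  linear_combination (6 * a : ℤ) * h.sum_range_sq_sub_mul_div
    - (6 * a * b ^ 2 : ℤ) * h.sum_range_sq_div_add_sum_range_div ha hb
    + (3 * a * b ^ 2 : ℤ) * h.two_mul_sum_range_mul_div hb
    + (a ^ 3 + a : ℤ) * sum_range_natCast_sq_mul_six (R := ℤ) b
    + (2 * b ^ 3 : ℤ) * sum_range_natCast_sq_mul_six (R := ℤ) a

end Nat.Coprime

theorem Int.fract_add_fract_add_half {R : Type*} [Field R] [LinearOrder R] [IsStrictOrderedRing R]
    [FloorRing R] (x : R) : Int.fract x + Int.fract (x + 1 / 2) = Int.fract (2 * x) + 1 / 2 := by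
  suffices h : ⌊x⌋ + ⌊x + 1 / 2⌋ = ⌊2 * x⌋ by
    rw [← Int.self_sub_floor, ← Int.self_sub_floor, ← Int.self_sub_floor, ← h]
    push_cast
    ring
  have hlo := Int.floor_le x
  have hhi := Int.lt_floor_add_one x
  rcases lt_or_ge (x - ⌊x⌋) (1 / 2) with h | h
  · have e1 : ⌊x + 1 / 2⌋ = ⌊x⌋ := Int.floor_eq_iff.2 ⟨by linarith, by linarith⟩
    have e2 : ⌊2 * x⌋ = 2 * ⌊x⌋ :=
      Int.floor_eq_iff.2 ⟨by push_cast; linarith, by push_cast; linarith⟩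
    rw [e1, e2]
    ring
  · have e1 : ⌊x + 1 / 2⌋ = ⌊x⌋ + 1 :=
      Int.floor_eq_iff.2 ⟨by push_cast; linarith, by push_cast; linarith⟩
    have e2 : ⌊2 * x⌋ = 2 * ⌊x⌋ + 1 :=
      Int.floor_eq_iff.2 ⟨by push_cast; linarith, by push_cast; linarith⟩
    rw [e1, e2]
    ring

theorem saw_eq_fract_sub_fract_neg (x : ℝ) : saw x = (Int.fract x - Int.fract (-x)) / 2 := by
  unfold saw
  split_ifs with hx
  · obtain ⟨n, rfl⟩ := hx
    rw [← Int.cast_neg, Int.fract_intCast, Int.fract_intCast, sub_zero, zero_div]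
  · have hfract : Int.fract x ≠ 0 := fun h0 ↦
      hx (by obtain ⟨n, hn⟩ := Int.fract_eq_zero_iff.1 h0; exact ⟨n, hn.symm⟩)
    rw [Int.fract_neg hfract]
    ring

theorem saw_zero : saw 0 = 0 := by simp [saw_eq_fract_sub_fract_neg]

theorem saw_add_half (x : ℝ) : saw (x + 1 / 2) = saw (2 * x) - saw x := by
  have hneg : Int.fract (-(x + 1 / 2)) = Int.fract (-x + 1 / 2) := by
    rw [← Int.fract_sub_one (-x + 1 / 2)]
    ring_nf
  simp only [saw_eq_fract_sub_fract_neg, hneg, ← mul_neg]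
  linear_combination (Int.fract_add_fract_add_half x - Int.fract_add_fract_add_half (-x)) / 2

theorem saw_natCast_div {m n : ℕ} (hn : 0 < n) (h : ¬ n ∣ m) :
    saw (m / n) = (m % n : ℕ) / n - 1 / 2 := by
  have hmod : ((m % n : ℕ) : ℝ) / n ≠ 0 :=
    div_ne_zero (by exact_mod_cast (mt Nat.dvd_of_mod_eq_zero h)) (by positivity)
  rw [saw_eq_fract_sub_fract_neg, Int.fract_neg, Int.fract_div_natCast_eq_div_natCast_mod]
  · ring
  · rwa [Int.fract_div_natCast_eq_div_natCast_mod]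

namespace Nat.Coprime

variable {a b : ℕ}

theorem saw_mul_saw {k : ℕ} (h : a.Coprime b) (hk : k < b) :
    saw ((k : ℝ) / b) * saw (((a : ℤ) : ℝ) * k / b)
      = ((k : ℝ) / b - 1 / 2) * ((a * k % b : ℕ) / b - 1 / 2) - if k = 0 then 1 / 4 else 0 := by
  rcases Nat.eq_zero_or_pos k with rfl | hk0
  · norm_num [saw_zero]
  have hb : 0 < b := by omega
  have hkb : ¬ b ∣ k := fun hdvd ↦ absurd (Nat.le_of_dvd hk0 hdvd) (by omega)
  have hakb : ¬ b ∣ a * k := fun hdvd ↦ hkb (h.symm.dvd_of_dvd_mul_left hdvd)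
  have hcast : ((a : ℤ) : ℝ) * k = ((a * k : ℕ) : ℝ) := by push_cast; ring
  rw [hcast, saw_natCast_div hb hkb, saw_natCast_div hb hakb, Nat.mod_eq_of_lt hk,
    if_neg hk0.ne']
  ring

theorem dedekindSum_eq (h : a.Coprime b) (hb : 0 < b) :
    (b : ℝ) ^ 2 * dedekindSum a b
      = ∑ k ∈ range b, (k : ℝ) * (a * k % b : ℕ) - b ^ 2 * (b - 1) / 4 := by
  have hterm : ∀ k ∈ range b, (b : ℝ) ^ 2 * (((k : ℝ) / b - 1 / 2) * ((a * k % b : ℕ) / b - 1 / 2))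
      = k * (a * k % b : ℕ) - b / 2 * k - b / 2 * (a * k % b : ℕ) + b ^ 2 / 4 := by
    intro k _
    field_simp
    ring
  have hperm := h.sum_range_comp_mul_mod (fun k ↦ (k : ℝ))
  rw [dedekindSum, sum_congr rfl fun k hk ↦ h.saw_mul_saw (mem_range.1 hk), sum_sub_distrib,
    sum_ite_eq', if_pos (mem_range.2 hb), mul_sub, mul_sum, sum_congr rfl hterm]
  simp only [sum_add_distrib, sum_sub_distrib, ← mul_sum, sum_const, card_range, nsmul_eq_mul]
  linear_combination (-b / 2 : ℝ) * hperm - b / 2 * sum_range_natCast_mul_two (R := ℝ) b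

theorem dedekindSum_add_dedekindSum (h : a.Coprime b) (ha : 0 < a) (hb : 0 < b) :
    12 * a * b * (dedekindSum a b + dedekindSum b a) = (a : ℝ) ^ 2 + b ^ 2 + 1 - 3 * a * b := by
  have key := congrArg (Int.cast : ℤ → ℝ) (h.sum_range_mul_mul_mod_reciprocity ha hb)
  simp only [Int.cast_mul, Int.cast_add, Int.cast_sub, Int.cast_pow, Int.cast_sum, Int.cast_natCast,
    Int.cast_ofNat, Int.cast_one] at key
  refine mul_left_cancel₀ (by positivity : (a * b : ℝ) ≠ 0) ?_
  linear_combination 12 * a ^ 2 * h.dedekindSum_eq hb + 12 * b ^ 2 * h.symm.dedekindSum_eq ha + key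

end Nat.Coprime

theorem drSum_zero_half (q : ℤ) (p : ℕ) :
    drSum q p 0 (1 / 2) = dedekindSum q (2 * p) - dedekindSum q p := by
  have heven (i : ℕ) : ((2 * i : ℕ) : ℝ) / (2 * p : ℕ) = i / p := by
    push_cast
    exact mul_div_mul_left _ _ two_ne_zero
  have hodd (i : ℕ) : ((2 * i + 1 : ℕ) : ℝ) / (2 * p : ℕ) = (i + 1 / 2) / p := by
    rw [← mul_div_mul_left _ (p : ℝ) two_ne_zero]
    push_cast
    ring_nf
  simp only [dedekindSum, drSum, sum_range_two_mul, mul_div_assoc, heven, hodd, add_zero]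
  ring

theorem drSum_half_zero (q : ℤ) (p : ℕ) :
    drSum q p (1 / 2) 0 = dedekindSum (2 * q) p - dedekindSum q p := by
  rw [dedekindSum, dedekindSum, drSum, ← sum_sub_distrib]
  refine sum_congr rfl fun μ _ ↦ ?_
  rw [add_zero, mul_div_assoc, saw_add_half]
  push_cast
  ring_nf

theorem dr_reciprocity (a b : ℕ) (ha : 0 < a) (hb : 0 < b)
    (hcop : Nat.Coprime a b) (hodd : Odd a) :
    drSum (a : ℤ) b 0 (1/2) + drSum (b : ℤ) a (1/2) 0
      = (2 * (b : ℝ)^2 - (a : ℝ)^2 - 1) / (24 * a * b) := by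
  have hcop2 : a.Coprime (2 * b) := Nat.coprime_mul_iff_right.2 ⟨hodd.coprime_two_right, hcop⟩
  have hrec2 := hcop2.dedekindSum_add_dedekindSum ha (by omega)
  have hrec := hcop.dedekindSum_add_dedekindSum ha hb
  push_cast at hrec2
  rw [drSum_zero_half, drSum_half_zero, eq_div_iff (by positivity)]
  linear_combination hrec2 - 2 * hrec
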